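/- Let σ > 0 and let W_σ be the Lennard-Jones potential. Define A_σ(a) := (1/12) Σ_{j=2}^∞ (j − j³)·W_σ''(a·j) for a > 0. If a/σ > ( 26·(ζ(11) − ζ(13)) / (7·(ζ(5) − ζ(7))) )^{1/6}, where ζ denotes the Riemann zeta function, then A_σ(a) > 0. -/

import Mathlib

open Filter Set Real

/-- The Lennard-Jones potential `W_σ(t) = (σ/t)^12 − (σ/t)^6`. -/
noncomputable def LJ (σ : ℝ) : ℝ → ℝ := fun t => (σ / t) ^ 12 - (σ / t) ^ 6

/-- Riemann zeta function for real `s > 1`: `ζ(s) = ∑_{j=1}^∞ j^{−s}`. -/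
noncomputable def zetaR (s : ℝ) : ℝ := ∑' j : ℕ, ((j : ℝ) + 1) ^ (-s)

/-- `A_σ(a) = (1/12) ∑_{j=2}^∞ (j − j³) W_σ''(aj)`. -/
noncomputable def ALJ (σ : ℝ) (a : ℝ) : ℝ :=
  (1 / 12) * ∑' j : ℕ,
    (((j : ℝ) + 2) - ((j : ℝ) + 2) ^ 3) * deriv (deriv (LJ σ)) (a * ((j : ℝ) + 2))

/-!
Since `W_σ''(t) = 156 σ¹² t⁻¹⁴ − 42 σ⁶ t⁻⁸`, each term `(j − j³) W_σ''(aj)` is a combination of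
`j⁻¹³ − j⁻¹¹` and `j⁻⁷ − j⁻⁵`, and summing over `j ≥ 2` gives the closed form
`A_σ(a) = σ⁶ / (2 a¹⁴) · (7 a⁶ (ζ(5) − ζ(7)) − 26 σ⁶ (ζ(11) − ζ(13)))`.
Both zeta differences are positive, so `A_σ(a) > 0` exactly when `(a/σ)⁶` exceeds
`26 (ζ(11) − ζ(13)) / (7 (ζ(5) − ζ(7)))`.
-/

lemma LJ_eq_zpow (σ : ℝ) : LJ σ = fun t => σ ^ 12 * t ^ (-12 : ℤ) - σ ^ 6 * t ^ (-6 : ℤ) := by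
  funext t
  simp only [LJ, div_pow, zpow_neg, zpow_ofNat]
  ring

lemma hasDerivAt_LJ (σ : ℝ) {t : ℝ} (ht : t ≠ 0) :
    HasDerivAt (LJ σ) (-12 * σ ^ 12 * t ^ (-13 : ℤ) + 6 * σ ^ 6 * t ^ (-7 : ℤ)) t := by
  rw [LJ_eq_zpow]
  refine (((hasDerivAt_zpow (-12) t (Or.inl ht)).const_mul (σ ^ 12)).fun_sub
    ((hasDerivAt_zpow (-6) t (Or.inl ht)).const_mul (σ ^ 6))).congr_deriv ?_
  norm_num
  ring

lemma deriv_deriv_LJ (σ : ℝ) {t : ℝ} (ht : t ≠ 0) :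
    deriv (deriv (LJ σ)) t = 156 * σ ^ 12 * t ^ (-14 : ℤ) - 42 * σ ^ 6 * t ^ (-8 : ℤ) := by
  have hderiv : deriv (LJ σ) =ᶠ[nhds t]
      fun s => -12 * σ ^ 12 * s ^ (-13 : ℤ) + 6 * σ ^ 6 * s ^ (-7 : ℤ) := by
    filter_upwards [isOpen_ne.mem_nhds ht] with s hs
    exact (hasDerivAt_LJ σ hs).deriv
  rw [hderiv.deriv_eq]
  convert (((hasDerivAt_zpow (-13) t (Or.inl ht)).const_mul (-12 * σ ^ 12)).fun_add
    ((hasDerivAt_zpow (-7) t (Or.inl ht)).const_mul (6 * σ ^ 6))).deriv using 1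
  norm_num
  ring

lemma sub_pow_three_mul_deriv_deriv_LJ (σ : ℝ) {a n : ℝ} (ha : a ≠ 0) (hn : n ≠ 0) :
    (n - n ^ 3) * deriv (deriv (LJ σ)) (a * n) =
      156 * σ ^ 12 / a ^ 14 * ((n ^ 13)⁻¹ - (n ^ 11)⁻¹)
        - 42 * σ ^ 6 / a ^ 8 * ((n ^ 7)⁻¹ - (n ^ 5)⁻¹) := by
  rw [deriv_deriv_LJ σ (mul_ne_zero ha hn)]
  simp only [zpow_neg, zpow_ofNat, mul_pow]
  field_simp

lemma summable_inv_add_pow {k : ℕ} (hk : 1 < k) (m : ℕ) :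
    Summable fun j : ℕ => (((j : ℝ) + m) ^ k)⁻¹ := by
  simpa using (summable_nat_add_iff m).mpr (Real.summable_one_div_nat_pow.mpr hk)

lemma zetaR_natCast (k : ℕ) : zetaR k = ∑' j : ℕ, (((j : ℝ) + 1) ^ k)⁻¹ := by
  refine tsum_congr fun j => ?_
  rw [Real.rpow_neg (by positivity), Real.rpow_natCast]

lemma tsum_inv_add_two_pow {k : ℕ} (hk : 1 < k) :
    ∑' j : ℕ, (((j : ℝ) + 2) ^ k)⁻¹ = zetaR k - 1 := by
  have hs : Summable fun j : ℕ => (((j : ℝ) + 1) ^ k)⁻¹ := by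
    exact_mod_cast summable_inv_add_pow hk 1
  rw [zetaR_natCast, hs.tsum_eq_zero_add]
  norm_num [add_assoc, one_add_one_eq_two]

lemma zetaR_sub_pos {k l : ℕ} (hk : 1 < k) (hkl : k < l) : 0 < zetaR k - zetaR l := by
  have hs : ∀ m, 1 < m → Summable fun j : ℕ => (((j : ℝ) + 1) ^ m)⁻¹ := fun m hm => by
    exact_mod_cast summable_inv_add_pow hm 1
  rw [sub_pos, zetaR_natCast, zetaR_natCast]
  refine (hs l (hk.trans hkl)).tsum_lt_tsum (i := 1) (fun j => ?_) ?_ (hs k hk)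
  · exact inv_anti₀ (by positivity) (pow_le_pow_right₀ (by simp) hkl.le)
  · exact inv_strictAnti₀ (by positivity) (pow_lt_pow_right₀ (by norm_num) hkl)

lemma ALJ_eq (σ : ℝ) {a : ℝ} (ha : a ≠ 0) :
    ALJ σ a = σ ^ 6 / (2 * a ^ 14) *
      (7 * (zetaR 5 - zetaR 7) * a ^ 6 - 26 * (zetaR 11 - zetaR 13) * σ ^ 6) := by
  have hs : ∀ k, 1 < k → Summable fun j : ℕ => (((j : ℝ) + 2) ^ k)⁻¹ := fun k hk => by
    exact_mod_cast summable_inv_add_pow hk 2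
  have h13 := hs 13 (by norm_num)
  have h11 := hs 11 (by norm_num)
  have h7 := hs 7 (by norm_num)
  have h5 := hs 5 (by norm_num)
  unfold ALJ
  rw [tsum_congr fun (j : ℕ) =>
      sub_pow_three_mul_deriv_deriv_LJ σ ha (n := (j : ℝ) + 2) (by positivity),
    ((h13.sub h11).mul_left _).tsum_sub ((h7.sub h5).mul_left _),
    tsum_mul_left, tsum_mul_left, h13.tsum_sub h11, h7.tsum_sub h5,
    tsum_inv_add_two_pow (by norm_num), tsum_inv_add_two_pow (by norm_num),
    tsum_inv_add_two_pow (by norm_num), tsum_inv_add_two_pow (by norm_num)]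
  push_cast
  field_simp
  ring

/-- if `a/σ > (26(ζ(11)−ζ(13))/(7(ζ(5)−ζ(7))))^{1/6}`
then `A_σ(a) > 0`. -/
theorem stmt14 (σ a : ℝ) (hσ : 0 < σ)
    (h : (26 * (zetaR 11 - zetaR 13) / (7 * (zetaR 5 - zetaR 7))) ^ ((1 : ℝ) / 6)
          < a / σ) :
    0 < ALJ σ a := by
  have hZ₁ : 0 < zetaR 5 - zetaR 7 := by
    exact_mod_cast zetaR_sub_pos (k := 5) (l := 7) (by norm_num) (by norm_num)
  have hZ₂ : 0 < zetaR 11 - zetaR 13 := by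
    exact_mod_cast zetaR_sub_pos (k := 11) (l := 13) (by norm_num) (by norm_num)
  have haσ : 0 < a / σ := (rpow_nonneg (by positivity) _).trans_lt h
  have ha : 0 < a := by simpa [hσ] using haσ
  rw [one_div, rpow_inv_lt_iff_of_pos (by positivity) haσ.le (by norm_num), rpow_ofNat,
    div_pow, div_lt_div_iff₀ (by positivity) (by positivity)] at h
  rw [ALJ_eq σ ha.ne']
  exact mul_pos (by positivity) (by linarith)
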